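/- In the ring ℤ[i,φ], the element 1 + i is irreducible, and 2 = (1 + i)(1 − i). -/

import Mathlib

/-- `K = ℚ(i, √5)` as an intermediate field of `ℂ/ℚ`. -/
noncomputable def K : IntermediateField ℚ ℂ :=
  IntermediateField.adjoin ℚ {Complex.I, (Real.sqrt 5 : ℂ)}

/-- `i` as an element of `K`. -/
noncomputable def iK : K := ⟨Complex.I, IntermediateField.subset_adjoin ℚ _ (by simp)⟩

/-- `√5` as an element of `K`. -/
noncomputable def sqrt5K : K := ⟨(Real.sqrt 5 : ℂ), IntermediateField.subset_adjoin ℚ _ (by simp)⟩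

/-- The golden ratio `φ = (1 + √5)/2` as an element of `K`. -/
noncomputable def phiK : K := (1 + sqrt5K) / 2

/-- `ℤ[i,φ]`, the subring of `K` generated by `i` and `φ`
(equivalently, the `ℤ`-span of `{1, φ, i, iφ}`). -/
noncomputable def Ziphi : Subring K := Subring.closure {iK, phiK}

lemma one_add_i_mem : (1 : K) + iK ∈ Ziphi :=
  Subring.add_mem _ (Subring.one_mem _) (Subring.subset_closure (by simp))

lemma one_sub_i_mem : (1 : K) - iK ∈ Ziphi :=
  Subring.sub_mem _ (Subring.one_mem _) (Subring.subset_closure (by simp))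

/-!
Every element of `ℤ[i,φ]` is uniquely `α + βφ` with Gaussian integers `α, β` (uniqueness is the
irrationality of `φ`). The relative norm `α² + αβ - β² ∈ ℤ[i]`, followed by the Gaussian norm,
is a multiplicative norm `ℤ[i,φ] → ℤ` taking the value `1` exactly on units, since
`(α + βφ)(α + β - βφ) = α² + αβ - β²`. Now `1 + i` has norm `4`, and no element has norm `2`
(a parity check), so one factor of any factorization of `1 + i` has norm `1`.
-/

open Real

lemma iK_mul_self : iK * iK = -1 :=
  Subtype.ext (by simp [iK])

lemma coe_phiK : (phiK : ℂ) = (goldenRatio : ℂ) := by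
  simp [phiK, sqrt5K, goldenRatio]
  rfl

lemma phiK_mul_self : phiK * phiK = phiK + 1 := by
  apply Subtype.ext
  rw [IntermediateField.coe_mul, IntermediateField.coe_add, IntermediateField.coe_one, coe_phiK,
    ← sq]
  exact_mod_cast goldenRatio_sq

lemma int_add_int_mul_goldenRatio_inj {a b c d : ℤ}
    (h : a + b * goldenRatio = c + d * goldenRatio) : a = c ∧ b = d := by
  obtain rfl | hbd := eq_or_ne b d
  · exact ⟨by exact_mod_cast add_right_cancel h, rfl⟩
  · refine absurd ?_ ((goldenRatio_irrational.intCast_mul (sub_ne_zero.2 hbd)).ne_int (c - a))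
    push_cast
    linear_combination h

lemma eq_one_or_eq_one_of_mul_eq_four {m n : ℤ} (hm : 0 ≤ m) (hm2 : m ≠ 2) (h : m * n = 4) :
    m = 1 ∨ n = 1 := by
  have hm4 : m ≤ 4 := Int.le_of_dvd (by norm_num) ⟨n, h.symm⟩
  interval_cases m <;> omega

namespace Ziphi

local notation "ℤ[i]" => GaussianInt

noncomputable def i : Ziphi := ⟨iK, Subring.subset_closure (by simp)⟩

noncomputable def phi : Ziphi := ⟨phiK, Subring.subset_closure (by simp)⟩

lemma i_mul_self : i * i = -1 := Subtype.ext iK_mul_self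

lemma phi_mul_self : phi * phi = phi + 1 := Subtype.ext phiK_mul_self

noncomputable def ofGaussianInt : ℤ[i] →+* Ziphi :=
  Zsqrtd.lift ⟨i, by rw [i_mul_self]; simp⟩

lemma ofGaussianInt_apply (z : ℤ[i]) : ofGaussianInt z = z.re + z.im * i :=
  Zsqrtd.lift_apply_apply _ _

noncomputable def ofCoords (p : ℤ[i] × ℤ[i]) : Ziphi :=
  ofGaussianInt p.1 + ofGaussianInt p.2 * phi

def coordMul (p q : ℤ[i] × ℤ[i]) : ℤ[i] × ℤ[i] :=
  (p.1 * q.1 + p.2 * q.2, p.1 * q.2 + p.2 * q.1 + p.2 * q.2)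

lemma ofCoords_coordMul (p q : ℤ[i] × ℤ[i]) :
    ofCoords (coordMul p q) = ofCoords p * ofCoords q := by
  simp only [ofCoords, coordMul, map_add, map_mul]
  linear_combination (-ofGaussianInt p.2 * ofGaussianInt q.2) * phi_mul_self

lemma ofCoords_add (p q : ℤ[i] × ℤ[i]) : ofCoords (p + q) = ofCoords p + ofCoords q := by
  simp only [ofCoords, Prod.fst_add, Prod.snd_add, map_add]
  ring

lemma ofCoords_neg (p : ℤ[i] × ℤ[i]) : ofCoords (-p) = -ofCoords p := by
  simp only [ofCoords, Prod.fst_neg, Prod.snd_neg, map_neg]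
  ring

lemma ofCoords_surjective : Function.Surjective ofCoords := by
  rintro ⟨z, hz⟩
  induction hz using Subring.closure_induction with
  | mem x hx =>
    rcases hx with rfl | rfl
    · exact ⟨(⟨0, 1⟩, 0), by simp [ofCoords, ofGaussianInt_apply]; rfl⟩
    · exact ⟨(0, 1), by simp [ofCoords]; rfl⟩
  | zero => exact ⟨0, by simp [ofCoords]; rfl⟩
  | one => exact ⟨(1, 0), by simp [ofCoords]; rfl⟩
  | add x y _ _ hx hy =>
    obtain ⟨p, hp⟩ := hx
    obtain ⟨q, hq⟩ := hy
    exact ⟨p + q, by rw [ofCoords_add, hp, hq]; rfl⟩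
  | neg x _ hx =>
    obtain ⟨p, hp⟩ := hx
    exact ⟨-p, by rw [ofCoords_neg, hp]; rfl⟩
  | mul x y _ _ hx hy =>
    obtain ⟨p, hp⟩ := hx
    obtain ⟨q, hq⟩ := hy
    exact ⟨coordMul p q, by rw [ofCoords_coordMul, hp, hq]; rfl⟩

lemma coe_ofCoords (p : ℤ[i] × ℤ[i]) :
    ((ofCoords p : K) : ℂ) =
      ⟨p.1.re + p.2.re * goldenRatio, p.1.im + p.2.im * goldenRatio⟩ := by
  apply Complex.ext <;>
  simp [ofCoords, ofGaussianInt_apply, phi, i, iK, coe_phiK]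

lemma ofCoords_injective : Function.Injective ofCoords := by
  intro p q h
  have hC := congrArg (fun z : Ziphi => ((z : K) : ℂ)) h
  simp only [coe_ofCoords, Complex.mk.injEq] at hC
  obtain ⟨h1, h2⟩ := int_add_int_mul_goldenRatio_inj hC.1
  obtain ⟨h3, h4⟩ := int_add_int_mul_goldenRatio_inj hC.2
  exact Prod.ext (Zsqrtd.ext h1 h3) (Zsqrtd.ext h2 h4)

noncomputable def coords : Ziphi ≃ ℤ[i] × ℤ[i] :=
  (Equiv.ofBijective ofCoords ⟨ofCoords_injective, ofCoords_surjective⟩).symm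

lemma ofCoords_coords (z : Ziphi) : ofCoords (coords z) = z :=
  (Equiv.ofBijective ofCoords _).apply_symm_apply z

lemma coords_ofCoords (p : ℤ[i] × ℤ[i]) : coords (ofCoords p) = p :=
  (Equiv.ofBijective ofCoords _).symm_apply_apply p

def relNormForm (p : ℤ[i] × ℤ[i]) : ℤ[i] := p.1 ^ 2 + p.1 * p.2 - p.2 ^ 2

lemma relNormForm_coordMul (p q : ℤ[i] × ℤ[i]) :
    relNormForm (coordMul p q) = relNormForm p * relNormForm q := by
  simp only [relNormForm, coordMul]
  ring

noncomputable def relNorm : Ziphi →* ℤ[i] where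
  toFun z := relNormForm (coords z)
  map_one' := by
    rw [show (1 : Ziphi) = ofCoords (1, 0) by simp [ofCoords], coords_ofCoords]
    simp [relNormForm]
  map_mul' x y := by
    rw [← ofCoords_coords x, ← ofCoords_coords y, ← ofCoords_coordMul]
    simp only [coords_ofCoords, relNormForm_coordMul]

lemma relNorm_ofCoords (p : ℤ[i] × ℤ[i]) : relNorm (ofCoords p) = relNormForm p :=
  congrArg relNormForm (coords_ofCoords p)

-- `(p.1 + p.2, -p.2)` are the coordinates of the Galois conjugate under `φ ↦ 1 - φ`.
lemma ofCoords_mul_ofCoords_conj (p : ℤ[i] × ℤ[i]) :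
    ofCoords p * ofCoords (p.1 + p.2, -p.2) = ofGaussianInt (relNormForm p) := by
  have hprod : coordMul p (p.1 + p.2, -p.2) = (relNormForm p, 0) :=
    Prod.ext (by simp only [coordMul, relNormForm]; ring) (by simp only [coordMul]; ring)
  rw [← ofCoords_coordMul, hprod]
  simp [ofCoords]

lemma isUnit_iff_isUnit_relNorm (z : Ziphi) : IsUnit z ↔ IsUnit (relNorm z) := by
  refine ⟨IsUnit.map relNorm, fun h => ?_⟩
  obtain ⟨p, rfl⟩ := ofCoords_surjective z
  rw [relNorm_ofCoords] at h
  exact isUnit_of_mul_isUnit_left (ofCoords_mul_ofCoords_conj p ▸ h.map ofGaussianInt)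

noncomputable def absNorm : Ziphi →* ℤ := Zsqrtd.normMonoidHom.comp relNorm

lemma absNorm_apply (z : Ziphi) : absNorm z = (relNorm z).norm := rfl

lemma absNorm_nonneg (z : Ziphi) : 0 ≤ absNorm z := Zsqrtd.norm_nonneg (by norm_num) _

lemma isUnit_iff_absNorm_eq_one (z : Ziphi) : IsUnit z ↔ absNorm z = 1 :=
  (isUnit_iff_isUnit_relNorm z).trans (Zsqrtd.norm_eq_one_iff' (by norm_num) _).symm

lemma absNorm_ne_two (z : Ziphi) : absNorm z ≠ 2 := by
  obtain ⟨⟨⟨a, c⟩, ⟨b, d⟩⟩, rfl⟩ := ofCoords_surjective z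
  -- A Gaussian integer of norm 2 has both parts odd, so its norm is a sum of two odd squares
  -- mod 4; the real and imaginary parts of the relative norm are never both odd.
  have key : ∀ a b c d : ZMod 4,
      (a^2 - c^2 + a*b - c*d - b^2 + d^2)^2 + (2*a*c + a*d + b*c - 2*b*d)^2 ≠ 2 := by
    decide
  intro h
  have hpoly : absNorm (ofCoords (⟨a, c⟩, ⟨b, d⟩)) =
      (a^2 - c^2 + a*b - c*d - b^2 + d^2)^2 + (2*a*c + a*d + b*c - 2*b*d)^2 := by
    simp [absNorm_apply, relNorm_ofCoords, relNormForm, Zsqrtd.norm_def, sq]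
    ring
  exact key a b c d (by exact_mod_cast congrArg (Int.cast : ℤ → ZMod 4) (hpoly.symm.trans h))

lemma absNorm_one_add_i : absNorm (1 + i) = 4 := by
  rw [show 1 + i = ofCoords (⟨1, 1⟩, 0) by simp [ofCoords, ofGaussianInt_apply],
    absNorm_apply, relNorm_ofCoords]
  rfl

lemma irreducible_one_add_i : Irreducible (1 + i) := by
  refine ⟨fun hunit => ?_, fun x y hxy => ?_⟩
  · have := (isUnit_iff_absNorm_eq_one _).1 hunit
    rw [absNorm_one_add_i] at this
    omega
  · simp only [isUnit_iff_absNorm_eq_one]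
    refine eq_one_or_eq_one_of_mul_eq_four (absNorm_nonneg x) (absNorm_ne_two x) ?_
    rw [← map_mul, ← hxy, absNorm_one_add_i]

lemma two_eq_one_add_i_mul_one_sub_i : (2 : Ziphi) = (1 + i) * (1 - i) := by
  linear_combination i_mul_self

end Ziphi

/-- In ℤ[i,φ], the element 1 + i is irreducible and 2 = (1+i)(1-i). -/
theorem stmt10 :
    Irreducible (⟨1 + iK, one_add_i_mem⟩ : Ziphi) ∧
    (2 : Ziphi) = ⟨1 + iK, one_add_i_mem⟩ * ⟨1 - iK, one_sub_i_mem⟩ :=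
  ⟨Ziphi.irreducible_one_add_i, Ziphi.two_eq_one_add_i_mul_one_sub_i⟩
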